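/- arXiv:1903.10724 — 7 statements merged into one kernel-verified Lean document; each statement's English description precedes it below -/
import Mathlib

section
/- Let (X,*) be a group and define [xyz] = x * y⁻¹ * z. Then (X,[ ]) is a ternary quasigroup satisfying both the left nesting condition [ab[bcd]] = [a[abc][[abc]cd]] and the right nesting condition [[abc]cd] = [[ab[bcd]][bcd]d] for all a,b,c,d ∈ X. -/
/-- For a group `(X,*)`, the operation `[xyz] = x * y⁻¹ * z`
makes `X` a ternary quasigroup satisfying the left and right nesting
conditions LN and RN. -/
theorem stmt1 {X : Type*} [Group X] :
    let t : X → X → X → X := fun x y z => x * y⁻¹ * z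
    (∀ b c, Function.Bijective fun x => t x b c) ∧
    (∀ a c, Function.Bijective fun y => t a y c) ∧
    (∀ a b, Function.Bijective fun z => t a b z) ∧
    (∀ a b c d, t a b (t b c d) = t a (t a b c) (t (t a b c) c d)) ∧
    (∀ a b c d, t (t a b c) c d = t (t a b (t b c d)) (t b c d) d) := by
  intro t
  refine ⟨?_, ?_, ?_, ?_, ?_⟩
  · intro b c
    exact ⟨fun x y h => by simpa [t] using h,
      fun y => ⟨y * c⁻¹ * b, by simp [t, mul_assoc]⟩⟩
  · intro a c
    exact ⟨fun x y h => by
      simp only [t, mul_left_cancel_iff, mul_right_cancel_iff, inv_inj] at h; exact h,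
      fun y => ⟨(a⁻¹ * y * c⁻¹)⁻¹, by simp [t, mul_assoc]⟩⟩
  · intro a b
    exact ⟨fun x y h => by simpa [t] using h,
      fun y => ⟨b * a⁻¹ * y, by simp [t, mul_assoc]⟩⟩
  · intro a b c d; simp [t, mul_assoc]
  · intro a b c d; simp [t, mul_assoc]
end

section
/- Let (X,*) be a group, α ∈ X a fixed element, and define [xyz] = y * z⁻¹ * α * x. Then (X,[ ]) is a ternary quasigroup satisfying both the left nesting condition [ab[bcd]] = [a[abc][[abc]cd]] and the right nesting condition [[abc]cd] = [[ab[bcd]][bcd]d] for all a,b,c,d ∈ X. -/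
/-- For a group `(X,*)` and a fixed `α ∈ X`, the operation
`[xyz] = y * z⁻¹ * α * x` makes `X` a ternary quasigroup satisfying the
left and right nesting conditions LN and RN. -/
theorem stmt2 {X : Type*} [Group X] (α : X) :
    let t : X → X → X → X := fun x y z => y * z⁻¹ * α * x
    (∀ b c, Function.Bijective fun x => t x b c) ∧
    (∀ a c, Function.Bijective fun y => t a y c) ∧
    (∀ a b, Function.Bijective fun z => t a b z) ∧
    (∀ a b c d, t a b (t b c d) = t a (t a b c) (t (t a b c) c d)) ∧
    (∀ a b c d, t (t a b c) c d = t (t a b (t b c d)) (t b c d) d) := by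
  intro t
  refine ⟨fun b c => ?_, fun a c => ?_, fun a b => ?_, fun a b c d => ?_, fun a b c d => ?_⟩
  · exact (Equiv.mulLeft (b * c⁻¹ * α)).bijective
  · have : (fun y => t a y c) = fun y => y * (c⁻¹ * α * a) := by
      funext y; simp [t, mul_assoc]
    rw [this]; exact (Equiv.mulRight (c⁻¹ * α * a)).bijective
  · constructor
    · intro z w h
      simpa [t, mul_left_cancel_iff, mul_right_cancel_iff] using h
    · intro w
      exact ⟨(w * a⁻¹ * α⁻¹)⁻¹ * b, by simp [t]⟩
  · simp only [t]; group
  · simp only [t]; group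
end

section
/- Let X be a set with ternary operation [ ] satisfying the left and right nesting conditions (LN): [ab[bcd]] = [a[abc][[abc]cd]] and (RN): [[abc]cd] = [[ab[bcd]][bcd]d]. Define, on the free R-module Cₙ generated by (n+2)-tuples of elements of X, the face maps d₀ⁿ'ᴸ(x₀,…,xₙ₊₁) = (x₁,…,xₙ₊₁) and dᵢⁿ'ᴸ(x₀,…,xₙ₊₁) = dᵢ₋₁ⁿ'ᴸ(x₀,…,xᵢ₋₁,[xᵢ₋₁xᵢxᵢ₊₁],xᵢ₊₁,…,xₙ₊₁) for 1 ≤ i ≤ n. Then the maps dᵢⁿ'ᴸ satisfy the presimplicial identities dᵢⁿ⁻¹'ᴸ dⱼⁿ'ᴸ = dⱼ₋₁ⁿ⁻¹'ᴸ dᵢⁿ'ᴸ for 0 ≤ i < j ≤ n. -/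
/-!
Write `Sₖ` for the substitution `xₖ ↦ [xₖ₋₁ xₖ xₖ₊₁]`, so that `dⱼ = d₀ ∘ S₁ ∘ ⋯ ∘ Sⱼ`.
Substitutions at distance at least two commute, adjacent ones satisfy the braid relation
`Sₖ₊₁ Sₖ Sₖ₊₁ = Sₖ Sₖ₊₁ Sₖ` (on the two changed entries this is exactly RN and LN), and
`Sₖ ∘ dₘ = dₘ ∘ Sₖ₊₁` for `m < k`. Pushing `S`'s through the face maps reduces the identity
`dᵢ dⱼ = dⱼ₋₁ dᵢ` to the case `j = i + 1`, which follows by induction on `i` from the braid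
relation.
-/

universe u
variable {X : Type u}

open Fin.NatCast in
/-- Substitution: replace the `i`-th entry `xᵢ` of the tuple by `[xᵢ₋₁ xᵢ xᵢ₊₁]`. -/
def subst (t : X → X → X → X) (n i : ℕ) (x : Fin (n + 2) → X) : Fin (n + 2) → X :=
  Function.update x (i : Fin (n + 2))
    (t (x ((i : Fin (n + 2)) - 1)) (x (i : Fin (n + 2))) (x ((i : Fin (n + 2)) + 1)))

/-- Left face maps `dᵢⁿ'ᴸ` on tuples. -/
def dL (t : X → X → X → X) (n : ℕ) : ℕ → (Fin (n + 2) → X) → (Fin (n + 1) → X)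
  | 0, x => fun j => x j.succ
  | i + 1, x => dL t n i (subst t n (i + 1) x)

/-- Auxiliary for right face maps: `dRa t n m = d_{n-m}ⁿ'ᴿ`. -/
def dRa (t : X → X → X → X) (n : ℕ) : ℕ → (Fin (n + 2) → X) → (Fin (n + 1) → X)
  | 0, x => fun j => x j.castSucc
  | m + 1, x => dRa t n m (subst t n (n - m) x)

/-- Right face maps `dᵢⁿ'ᴿ` on tuples. -/
def dR (t : X → X → X → X) (n i : ℕ) : (Fin (n + 2) → X) → (Fin (n + 1) → X) :=
  dRa t n (n - i)

/-- Left face maps on the free module `Cₙ = R⟨X^{n+2}⟩`. -/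
noncomputable def dLhat (R : Type*) [CommRing R] (t : X → X → X → X) (n i : ℕ) :
    ((Fin (n + 2) → X) →₀ R) →ₗ[R] ((Fin (n + 1) → X) →₀ R) :=
  Finsupp.lmapDomain R R (dL t n i)

/-- Right face maps on the free module `Cₙ = R⟨X^{n+2}⟩`. -/
noncomputable def dRhat (R : Type*) [CommRing R] (t : X → X → X → X) (n i : ℕ) :
    ((Fin (n + 2) → X) →₀ R) →ₗ[R] ((Fin (n + 1) → X) →₀ R) :=
  Finsupp.lmapDomain R R (dR t n i)

section substAt

variable {α β : Type*} [DecidableEq α] (t : β → β → β → β)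

def substAt (p q r : α) (y : α → β) : α → β :=
  Function.update y q (t (y p) (y q) (y r))

theorem substAt_comp_injective {α' : Type*} [DecidableEq α'] {f : α' → α} (hf : f.Injective)
    (p q r : α') (x : α → β) :
    substAt t p q r (x ∘ f) = substAt t (f p) (f q) (f r) x ∘ f :=
  (Function.update_comp_eq_of_injective x hf q _).symm

theorem substAt_comm {p q r p' q' r' : α} (hp : p ≠ q') (hq : q ≠ q') (hr : r ≠ q')
    (hp' : p' ≠ q) (hr' : r' ≠ q) (x : α → β) :
    substAt t p q r (substAt t p' q' r' x) = substAt t p' q' r' (substAt t p q r x) := by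
  simp only [substAt, Function.update_of_ne hp, Function.update_of_ne hq, Function.update_of_ne hr,
    Function.update_of_ne hp', Function.update_of_ne hq.symm, Function.update_of_ne hr']
  exact Function.update_comm hq.symm _ _ _

theorem substAt_braid
    (hLN : ∀ a b c d, t a b (t b c d) = t a (t a b c) (t (t a b c) c d))
    (hRN : ∀ a b c d, t (t a b c) c d = t (t a b (t b c d)) (t b c d) d)
    {p q r s : α} (hpq : p ≠ q) (hpr : p ≠ r) (hqr : q ≠ r) (hqs : q ≠ s)
    (hrs : r ≠ s) (x : α → β) :
    substAt t q r s (substAt t p q r (substAt t q r s x))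
      = substAt t p q r (substAt t q r s (substAt t p q r x)) := by
  simp only [substAt, Function.update_self, Function.update_of_ne hpq, Function.update_of_ne hpr,
    Function.update_of_ne hqr, Function.update_of_ne hqr.symm,
    Function.update_of_ne hqs.symm, Function.update_of_ne hrs.symm]
  conv_lhs => rw [Function.update_comm hqr.symm, Function.update_idem]
  conv_rhs => rw [Function.update_comm hqr, Function.update_idem]
  rw [← hRN, ← hLN]
  exact Function.update_comm hqr _ _ _

end substAt

section subst

variable (t : X → X → X → X)

open Fin.NatCast in
theorem subst_succ_eq_substAt {N k : ℕ} (hk : k + 1 ≤ N) (y : Fin (N + 2) → X) :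
    subst t N (k + 1) y = substAt t ⟨k, by omega⟩ ⟨k + 1, by omega⟩ ⟨k + 2, by omega⟩ y := by
  have hq : ((k + 1 : ℕ) : Fin (N + 2)) = ⟨k + 1, by omega⟩ :=
    Fin.ext (Fin.val_cast_of_lt (by omega))
  have hp : (⟨k + 1, by omega⟩ - 1 : Fin (N + 2)) = ⟨k, by omega⟩ := by
    rw [sub_eq_iff_eq_add]
    ext
    simp [Fin.val_add, Nat.mod_eq_of_lt (show k + 1 < N + 2 by omega)]
  have hr : (⟨k + 1, by omega⟩ + 1 : Fin (N + 2)) = ⟨k + 2, by omega⟩ := by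
    ext
    simp [Fin.val_add, Nat.mod_eq_of_lt (show k + 2 < N + 2 by omega)]
  rw [subst, hq, hp, hr, substAt]

theorem subst_comm {N a b : ℕ} (hab : a + 2 ≤ b) (hb : b + 1 ≤ N) (x : Fin (N + 2) → X) :
    subst t N (b + 1) (subst t N (a + 1) x) = subst t N (a + 1) (subst t N (b + 1) x) := by
  simp only [subst_succ_eq_substAt t (by omega : a + 1 ≤ N), subst_succ_eq_substAt t hb]
  refine substAt_comm t ?_ ?_ ?_ ?_ ?_ x <;> simp only [ne_eq, Fin.mk.injEq] <;> omega

theorem subst_braid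
    (hLN : ∀ a b c d, t a b (t b c d) = t a (t a b c) (t (t a b c) c d))
    (hRN : ∀ a b c d, t (t a b c) c d = t (t a b (t b c d)) (t b c d) d)
    {N a : ℕ} (ha : a + 2 ≤ N) (x : Fin (N + 2) → X) :
    subst t N (a + 2) (subst t N (a + 1) (subst t N (a + 2) x))
      = subst t N (a + 1) (subst t N (a + 2) (subst t N (a + 1) x)) := by
  simp only [subst_succ_eq_substAt t (by omega : a + 1 ≤ N), subst_succ_eq_substAt t ha]
  refine substAt_braid t hLN hRN ?_ ?_ ?_ ?_ ?_ x <;> simp only [ne_eq, Fin.mk.injEq] <;> omega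

theorem subst_dL {n m k : ℕ} (hmk : m ≤ k) (hk : k + 1 ≤ n) (x : Fin (n + 3) → X) :
    subst t n (k + 1) (dL t (n + 1) m x) = dL t (n + 1) m (subst t (n + 1) (k + 2) x) := by
  induction m generalizing x with
  | zero =>
    rw [subst_succ_eq_substAt t hk, subst_succ_eq_substAt t (by omega : k + 1 + 1 ≤ n + 1)]
    exact substAt_comp_injective t (Fin.succ_injective _) _ _ _ x
  | succ m ih =>
    rw [dL, dL, ih (by omega), subst_comm t (by omega) (by omega)]

theorem dL_dL_succ
    (hLN : ∀ a b c d, t a b (t b c d) = t a (t a b c) (t (t a b c) c d))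
    (hRN : ∀ a b c d, t (t a b c) c d = t (t a b (t b c d)) (t b c d) d)
    {n i : ℕ} (hi : i ≤ n) (x : Fin (n + 3) → X) :
    dL t n i (dL t (n + 1) (i + 1) x) = dL t n i (dL t (n + 1) i x) := by
  induction i generalizing x with
  | zero =>
    funext j
    -- `d₀ ∘ d₀` forgets the entry that `S₁` changes.
    show substAt t ⟨0, by omega⟩ ⟨1, by omega⟩ ⟨2, by omega⟩ x j.succ.succ = x j.succ.succ
    exact Function.update_of_ne (Fin.ne_of_val_ne (by simp)) _ _
  | succ i ih =>
    calc dL t n (i + 1) (dL t (n + 1) (i + 2) x)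
        = dL t n i (dL t (n + 1) i
            (subst t (n + 1) (i + 2) (subst t (n + 1) (i + 1) (subst t (n + 1) (i + 2) x)))) := by
          rw [dL.eq_2, dL.eq_2 t (n + 1), dL.eq_2 t (n + 1), subst_dL t le_rfl (by omega)]
      _ = dL t n i (dL t (n + 1) i
            (subst t (n + 1) (i + 1) (subst t (n + 1) (i + 2) (subst t (n + 1) (i + 1) x)))) := by
          rw [subst_braid t hLN hRN (by omega)]
      _ = dL t n i (dL t (n + 1) i (subst t (n + 1) (i + 2) (subst t (n + 1) (i + 1) x))) :=
          ih (by omega) _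
      _ = dL t n (i + 1) (dL t (n + 1) (i + 1) x) := by
          rw [dL.eq_2 t n, dL.eq_2 t (n + 1), subst_dL t le_rfl (by omega)]

theorem dL_dL
    (hLN : ∀ a b c d, t a b (t b c d) = t a (t a b c) (t (t a b c) c d))
    (hRN : ∀ a b c d, t (t a b c) c d = t (t a b (t b c d)) (t b c d) d)
    {n i j : ℕ} (hij : i < j) (hj : j ≤ n + 1) (x : Fin (n + 3) → X) :
    dL t n i (dL t (n + 1) j x) = dL t n (j - 1) (dL t (n + 1) i x) := by
  induction j generalizing x with
  | zero => omega
  | succ j ih =>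
    obtain rfl | hij := (Nat.lt_succ_iff.mp hij).eq_or_lt
    · exact dL_dL_succ t hLN hRN (by omega) x
    · obtain ⟨j, rfl⟩ : ∃ j', j = j' + 1 := ⟨j - 1, by omega⟩
      rw [dL.eq_2, ih hij (by omega)]
      simp only [Nat.add_sub_cancel]
      rw [dL.eq_2 t n _ j, subst_dL t (by omega) (by omega)]

end subst

/-- If the ternary operation satisfies LN and RN, then the left
face maps `dᵢⁿ'ᴸ` on the free modules `Cₙ = R⟨X^{n+2}⟩` satisfy the
presimplicial identities `dᵢⁿ⁻¹'ᴸ dⱼⁿ'ᴸ = dⱼ₋₁ⁿ⁻¹'ᴸ dᵢⁿ'ᴸ` for `i < j ≤ n`.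
(Here `dLhat R t n i : Cₙ₊₁ → Cₙ` is the face map `dᵢ^{n+1,L}`.) -/
theorem stmt5 (R : Type*) [CommRing R] (t : X → X → X → X)
    (hLN : ∀ a b c d, t a b (t b c d) = t a (t a b c) (t (t a b c) c d))
    (hRN : ∀ a b c d, t (t a b c) c d = t (t a b (t b c d)) (t b c d) d) :
    ∀ n i j : ℕ, i < j → j ≤ n + 1 →
      (dLhat R t n i).comp (dLhat R t (n + 1) j)
        = (dLhat R t n (j - 1)).comp (dLhat R t (n + 1) i) := by
  intro n i j hij hj
  simp only [dLhat, ← Finsupp.lmapDomain_comp]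
  congr 1
  exact funext (dL_dL t hLN hRN hij hj)
end

section
/- Let X be a set with ternary operation [ ] satisfying (LN) and (RN). Define on Cₙ = R⟨X^{n+2}⟩ the face maps dₙⁿ'ᴿ(x₀,…,xₙ₊₁) = (x₀,…,xₙ) and dᵢ₋₁ⁿ'ᴿ(x₀,…,xₙ₊₁) = dᵢⁿ'ᴿ(x₀,…,xᵢ₋₁,[xᵢ₋₁xᵢxᵢ₊₁],xᵢ₊₁,…,xₙ₊₁) for 1 ≤ i ≤ n. Then with dᵢⁿ := dᵢⁿ'ᴸ − dᵢⁿ'ᴿ (with dᵢⁿ'ᴸ as in the standard left face maps), the family (Cₙ, dᵢⁿ) is a presimplicial module: dᵢⁿ⁻¹ dⱼⁿ = dⱼ₋₁ⁿ⁻¹ dᵢⁿ for 0 ≤ i < j ≤ n. -/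
/-!
On tuples, the left face `dᵢᴸ` and the right face `dᵢᴿ` are described by recurrences along the
tuple: `y = dᵢᴸ x` has `y_k = x_{k+1}` for `k ≥ i` and `y_k = [x_k x_{k+1} y_{k+1}]` for `k < i`,
while `z = dᵢᴿ x` has `z_k = x_k` for `k ≤ i` and `z_{k+1} = [z_k x_{k+1} x_{k+2}]` for `k ≥ i`.
Read on sequences `ℕ → X`, the four identities `dᵢᴸ dⱼ₊₁ᴸ = dⱼᴸ dᵢᴸ`, `dᵢᴿ dⱼ₊₁ᴿ = dⱼᴿ dᵢᴿ`,
`dᵢᴸ dⱼ₊₁ᴿ = dⱼᴿ dᵢᴸ` and `dᵢᴿ dⱼ₊₁ᴸ = dⱼᴸ dᵢᴿ` (`i ≤ j`) are proved entry by entry, by an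
induction along these recurrences in which every step is one application of (LN) or (RN); the
mixed identity `dᴸ dᴿ` needs neither. The faces `dᵢ = dᵢᴸ - dᵢᴿ` are linear, so expanding
`dᵢ dⱼ₊₁` into four products and matching them pairwise gives the claim.
-/

universe u
variable {X : Type u}

def SatisfiesLN (t : X → X → X → X) : Prop :=
  ∀ a b c d, t a b (t b c d) = t a (t a b c) (t (t a b c) c d)

def SatisfiesRN (t : X → X → X → X) : Prop :=
  ∀ a b c d, t (t a b c) c d = t (t a b (t b c d)) (t b c d) d

def leftFace (t : X → X → X → X) (i : ℕ) (x : ℕ → X) (k : ℕ) : X :=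
  if h : i ≤ k then x (k + 1) else t (x k) (x (k + 1)) (leftFace t i x (k + 1))
termination_by i - k

def rightFace (t : X → X → X → X) (i : ℕ) (x : ℕ → X) : ℕ → X
  | 0 => x 0
  | k + 1 => if k < i then x (k + 1) else t (rightFace t i x k) (x (k + 1)) (x (k + 2))

def seqSubst (t : X → X → X → X) (p : ℕ) (x : ℕ → X) : ℕ → X :=
  Function.update x p (t (x (p - 1)) (x p) (x (p + 1)))

def IsLocal (N : ℕ) (f : (ℕ → X) → ℕ → X) : Prop :=
  ∀ x x' : ℕ → X, (∀ m ≤ N + 1, x m = x' m) → ∀ k ≤ N, f x k = f x' k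

section Faces

variable (t : X → X → X → X) {i : ℕ}

theorem leftFace_of_le (x : ℕ → X) {k : ℕ} (h : i ≤ k) : leftFace t i x k = x (k + 1) := by
  rw [leftFace, dif_pos h]

theorem leftFace_of_lt (x : ℕ → X) {k : ℕ} (h : k < i) :
    leftFace t i x k = t (x k) (x (k + 1)) (leftFace t i x (k + 1)) := by
  rw [leftFace, dif_neg (not_le.mpr h)]

theorem rightFace_of_le (x : ℕ → X) {k : ℕ} (h : k ≤ i) : rightFace t i x k = x k := by
  cases k with
  | zero => rfl
  | succ k => exact if_pos h

theorem rightFace_succ (x : ℕ → X) {k : ℕ} (h : i ≤ k) :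
    rightFace t i x (k + 1) = t (rightFace t i x k) (x (k + 1)) (x (k + 2)) :=
  if_neg (not_lt.mpr h)

theorem leftFace_isLocal {N : ℕ} (hi : i ≤ N) : IsLocal N (leftFace t i) := by
  intro x x' h k hk
  induction hk using Nat.decreasingInduction with
  | self => rw [leftFace_of_le t x hi, leftFace_of_le t x' hi, h _ le_rfl]
  | of_succ k hk ih =>
    rcases le_or_gt i k with hik | hik
    · rw [leftFace_of_le t x hik, leftFace_of_le t x' hik, h _ (by omega)]
    · rw [leftFace_of_lt t x hik, leftFace_of_lt t x' hik, ih, h k (by omega), h (k + 1) (by omega)]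

theorem rightFace_isLocal {N : ℕ} : IsLocal N (rightFace t i) := by
  intro x x' h k hk
  induction k with
  | zero => exact h 0 (by omega)
  | succ k ih =>
    rcases lt_or_ge k i with hik | hik
    · rw [rightFace_of_le t x hik, rightFace_of_le t x' hik, h _ (by omega)]
    · rw [rightFace_succ t x hik, rightFace_succ t x' hik, ih (by omega), h (k + 1) (by omega),
        h (k + 2) (by omega)]

theorem leftFace_shift {x z : ℕ → X} {k : ℕ} (h : ∀ m ≥ k, z m = x (m + 1)) :
    leftFace t i z k = leftFace t (i + 1) x (k + 1) := by
  rcases le_or_gt i k with hik | hik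
  · rw [leftFace_of_le t z hik, leftFace_of_le t x (by omega), h _ (by omega)]
  · rw [leftFace_of_lt t z hik, leftFace_of_lt t x (by omega), h k le_rfl, h (k + 1) (by omega),
      leftFace_shift (k := k + 1) (fun m hm => h m (by omega))]
termination_by i - k

theorem rightFace_shift {x z : ℕ → X} {k : ℕ} (h : ∀ m, min i k ≤ m → z m = x (m + 1)) :
    rightFace t i z k = rightFace t (i + 1) x (k + 1) := by
  induction k with
  | zero => rw [rightFace_of_le t z (Nat.zero_le i), rightFace_of_le t x (by omega), h 0 (by omega)]
  | succ k ih =>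
    rcases lt_or_ge k i with hik | hik
    · rw [rightFace_of_le t z hik, rightFace_of_le t x (by omega), h _ (by omega)]
    · rw [rightFace_succ t z hik, rightFace_succ t x (by omega),
        ih (fun m hm => h m (by omega)), h (k + 1) (by omega), h (k + 2) (by omega)]

theorem leftFace_seqSubst_apply (x : ℕ → X) (k : ℕ) :
    leftFace t i (seqSubst t (i + 1) x) k = leftFace t (i + 1) x k := by
  rcases lt_trichotomy k i with hik | rfl | hik
  · rw [leftFace_of_lt t _ hik, leftFace_of_lt t x (by omega), leftFace_seqSubst_apply x (k + 1),
      seqSubst, Function.update_of_ne (by omega), Function.update_of_ne (by omega)]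
  · rw [leftFace_of_le t _ le_rfl, leftFace_of_lt t x (Nat.lt_succ_self _),
      leftFace_of_le t x le_rfl, seqSubst, Function.update_self, Nat.add_sub_cancel]
  · rw [leftFace_of_le t _ hik.le, leftFace_of_le t x hik, seqSubst,
      Function.update_of_ne (by omega)]
termination_by i - k

theorem rightFace_seqSubst_apply (x : ℕ → X) (k : ℕ) :
    rightFace t (i + 1) (seqSubst t (i + 1) x) k = rightFace t i x k := by
  induction k with
  | zero =>
    rw [rightFace_of_le t _ (Nat.zero_le _), rightFace_of_le t x (Nat.zero_le _), seqSubst,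
      Function.update_of_ne (by omega)]
  | succ k ih =>
    rcases lt_trichotomy k i with hik | rfl | hik
    · rw [rightFace_of_le t _ (by omega), rightFace_of_le t x hik, seqSubst,
        Function.update_of_ne (by omega)]
    · rw [rightFace_of_le t _ le_rfl, rightFace_succ t x le_rfl, rightFace_of_le t x le_rfl,
        seqSubst, Function.update_self, Nat.add_sub_cancel]
    · rw [rightFace_succ t _ hik, rightFace_succ t x hik.le, ih, seqSubst,
        Function.update_of_ne (by omega), Function.update_of_ne (by omega)]

end Faces

section Identities

variable {t : X → X → X → X} {i j : ℕ}

theorem leftFace_leftFace (hLN : SatisfiesLN t) (hRN : SatisfiesRN t) (hij : i ≤ j)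
    (x : ℕ → X) : leftFace t i (leftFace t (j + 1) x) = leftFace t j (leftFace t i x) := by
  set y := leftFace t (j + 1) x
  set z := leftFace t i x
  have hy : ∀ k < j + 1, y k = t (x k) (x (k + 1)) (y (k + 1)) := fun k hk => leftFace_of_lt t x hk
  have hz : ∀ k < i, z k = t (x k) (x (k + 1)) (z (k + 1)) := fun k hk => leftFace_of_lt t x hk
  have hz' : ∀ k ≥ i, z k = x (k + 1) := fun k hk => leftFace_of_le t x hk
  have hge : ∀ k ≥ i, leftFace t i y k = leftFace t j z k := fun k hk => by
    rw [leftFace_of_le t y hk,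
      leftFace_shift t (fun m hm => leftFace_of_le t x (le_trans hk hm))]
  suffices h : ∀ k ≤ i, leftFace t i y k = leftFace t j z k ∧
      y k = t (x k) (z k) (leftFace t i y k) by
    funext k
    rcases le_or_gt i k with hk | hk
    · exact hge k hk
    · exact (h k hk.le).1
  intro k hk
  induction hk using Nat.decreasingInduction with
  | self =>
    refine ⟨hge i le_rfl, ?_⟩
    rw [hy i (by omega), leftFace_of_le t y le_rfl, hz' i le_rfl]
  | of_succ k hk ih =>
    obtain ⟨hA, hyA⟩ := ih
    have hA' : leftFace t i y k = t (z k) (z (k + 1)) (leftFace t i y (k + 1)) := by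
      rw [leftFace_of_lt t y hk, hz k hk, hRN, ← hyA, ← hy k (by omega)]
    refine ⟨by rw [leftFace_of_lt t z (by omega : k < j), hA', hA], ?_⟩
    rw [hy k (by omega), hyA, hLN, ← hz k hk, ← hA']

theorem rightFace_rightFace (hLN : SatisfiesLN t) (hRN : SatisfiesRN t) (hij : i ≤ j)
    (x : ℕ → X) : rightFace t i (rightFace t (j + 1) x) = rightFace t j (rightFace t i x) := by
  set w := rightFace t (j + 1) x
  set z := rightFace t i x
  have hw : ∀ k ≥ j + 1, w (k + 1) = t (w k) (x (k + 1)) (x (k + 2)) :=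
    fun k hk => rightFace_succ t x hk
  have hw' : ∀ k ≤ j + 1, w k = x k := fun k hk => rightFace_of_le t x hk
  have hz : ∀ k ≥ i, z (k + 1) = t (z k) (x (k + 1)) (x (k + 2)) :=
    fun k hk => rightFace_succ t x hk
  have hle : ∀ k ≤ j, rightFace t i w k = rightFace t j z k := fun k hk => by
    rw [rightFace_of_le t z hk]
    exact rightFace_isLocal t w x (fun m hm => hw' m (by omega)) k le_rfl
  suffices h : ∀ k ≥ j, rightFace t i w k = rightFace t j z k ∧
      z (k + 1) = t (rightFace t i w k) (w (k + 1)) (x (k + 2)) by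
    funext k
    rcases le_or_gt k j with hk | hk
    · exact hle k hk
    · exact (h k hk.le).1
  intro k hk
  induction k, hk using Nat.le_induction with
  | base =>
    refine ⟨hle j le_rfl, ?_⟩
    rw [hz j hij, hle j le_rfl, rightFace_of_le t z le_rfl, hw' (j + 1) le_rfl]
  | succ k hk ih =>
    obtain ⟨hC, hzC⟩ := ih
    have hC' : rightFace t i w (k + 1) = t (rightFace t i w k) (w (k + 1)) (w (k + 2)) :=
      rightFace_succ t w (by omega)
    refine ⟨?_, ?_⟩
    · rw [hC', rightFace_succ t z hk, ← hC, hz (k + 1) (by omega), hzC, hw (k + 1) (by omega),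
        hLN]
    · rw [hz (k + 1) (by omega), hzC, hRN, ← hw (k + 1) (by omega), ← hC']

theorem leftFace_rightFace (hij : i ≤ j) (x : ℕ → X) :
    leftFace t i (rightFace t (j + 1) x) = rightFace t j (leftFace t i x) := by
  funext k
  rcases lt_or_ge k i with hk | hk
  · rw [rightFace_of_le t _ (by omega)]
    exact leftFace_isLocal t le_rfl _ x (fun m hm => rightFace_of_le t x (by omega)) k hk.le
  · rw [leftFace_of_le t _ hk, rightFace_shift t (fun m hm => leftFace_of_le t x (by omega))]

theorem rightFace_leftFace (hLN : SatisfiesLN t) (hRN : SatisfiesRN t) (hij : i ≤ j)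
    (x : ℕ → X) : rightFace t i (leftFace t (j + 1) x) = leftFace t j (rightFace t i x) := by
  set y := leftFace t (j + 1) x
  set z := rightFace t i x
  have hy : ∀ k < j + 1, y k = t (x k) (x (k + 1)) (y (k + 1)) := fun k hk => leftFace_of_lt t x hk
  have hy' : ∀ k ≥ j + 1, y k = x (k + 1) := fun k hk => leftFace_of_le t x hk
  have hz : ∀ k ≥ i, z (k + 1) = t (z k) (x (k + 1)) (x (k + 2)) :=
    fun k hk => rightFace_succ t x hk
  have hz' : ∀ k ≤ i, z k = x k := fun k hk => rightFace_of_le t x hk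
  have hbelow : ∀ k ≤ j, rightFace t i y k = t (z k) (x (k + 1)) (y (k + 1)) := by
    intro k hk
    induction k with
    | zero => rw [rightFace_of_le t y (Nat.zero_le i), hz' 0 (Nat.zero_le i), hy 0 (by omega)]
    | succ k ih =>
      rcases lt_or_ge k i with hki | hki
      · rw [rightFace_of_le t y hki, hz' (k + 1) hki, hy (k + 1) (by omega)]
      · rw [rightFace_succ t y hki, ih (by omega), hy (k + 1) (by omega), ← hRN, ← hz k hki]
  have habove : ∀ k ≥ j, rightFace t i y k = z (k + 1) := by
    intro k hk
    induction k, hk using Nat.le_induction with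
    | base => rw [hbelow j le_rfl, hy' (j + 1) le_rfl, hz j hij]
    | succ k hk ih =>
      rw [rightFace_succ t y (by omega), ih, hy' (k + 1) (by omega), hy' (k + 2) (by omega),
        hz (k + 1) (by omega)]
  have hmid : ∀ k ≤ j, rightFace t i y k = leftFace t j z k := by
    intro k hk
    induction hk using Nat.decreasingInduction with
    | self => rw [habove j le_rfl, leftFace_of_le t z le_rfl]
    | of_succ k hk ih =>
      rw [leftFace_of_lt t z hk, ← ih, hbelow (k + 1) hk, hbelow k hk.le]
      rcases le_or_gt i k with hik | hik
      · rw [hz k hik, ← hLN, ← hy (k + 1) (by omega)]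
      · rw [hz' (k + 1) hik, ← hy (k + 1) (by omega)]
  funext k
  rcases le_or_gt k j with hk | hk
  · exact hmid k hk
  · rw [habove k hk.le, leftFace_of_le t z hk.le]

end Identities

-- The cast `ℕ → Fin (n + 2)` extends a tuple periodically; only the entries `0, …, n + 1` are read.
open Fin.NatCast in
def toSeq {n : ℕ} (x : Fin (n + 2) → X) : ℕ → X := fun m => x m

def Computes (n : ℕ) (f : (ℕ → X) → ℕ → X) (F : (Fin (n + 2) → X) → Fin (n + 1) → X) :
    Prop :=
  IsLocal n f ∧ ∀ x k, F x k = f (toSeq x) k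

section Bridge

variable (t : X → X → X → X) {n : ℕ}

open Fin.NatCast in
theorem toSeq_subst {p : ℕ} (hp : p ≤ n) (x : Fin (n + 2) → X) {m : ℕ} (hm : m ≤ n + 1) :
    toSeq (subst t n (p + 1) x) m = seqSubst t (p + 1) (toSeq x) m := by
  have hcast : ∀ a ≤ n + 1, ((a : Fin (n + 2)) : ℕ) = a := fun a ha =>
    Fin.val_cast_of_lt (by omega)
  have hiff : (m : Fin (n + 2)) = ((p + 1 : ℕ) : Fin (n + 2)) ↔ m = p + 1 := by
    rw [Fin.ext_iff, hcast m hm, hcast (p + 1) (by omega)]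
  simp only [toSeq, subst, seqSubst, Function.update_apply, hiff]
  split_ifs
  · push_cast
    rw [add_sub_cancel_right]
  · rfl

theorem toSeq_of_lt (x : Fin (n + 2) → X) {m : ℕ} (hm : m < n + 2) : toSeq x m = x ⟨m, hm⟩ :=
  congrArg x (Fin.ext (Fin.val_cast_of_lt hm))

theorem dL_apply {i : ℕ} (hi : i ≤ n) (x : Fin (n + 2) → X) (k : Fin (n + 1)) :
    dL t n i x k = leftFace t i (toSeq x) k := by
  induction i generalizing x with
  | zero => rw [leftFace_of_le t _ (Nat.zero_le _), toSeq_of_lt x (by omega)]; rfl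
  | succ i ih =>
    rw [dL, ih (by omega), ← leftFace_seqSubst_apply]
    exact leftFace_isLocal t (by omega) _ _ (fun m hm => toSeq_subst t (by omega) x hm) k
      (by omega)

theorem dRa_apply {m : ℕ} (hm : m ≤ n) (x : Fin (n + 2) → X) (k : Fin (n + 1)) :
    dRa t n m x k = rightFace t (n - m) (toSeq x) k := by
  induction m generalizing x with
  | zero => rw [Nat.sub_zero, rightFace_of_le t _ (by omega), toSeq_of_lt x (by omega)]; rfl
  | succ m ih =>
    obtain ⟨p, hp⟩ : ∃ p, n - m = p + 1 := ⟨n - m - 1, by omega⟩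
    rw [dRa, ih (by omega), hp, show n - (m + 1) = p by omega,
      ← rightFace_seqSubst_apply t (toSeq x)]
    exact rightFace_isLocal t _ _ (fun m' hm' => toSeq_subst t (by omega) x hm') k (by omega)

theorem computes_dL {i : ℕ} (hi : i ≤ n) : Computes n (leftFace t i) (dL t n i) :=
  ⟨leftFace_isLocal t hi, dL_apply t hi⟩

theorem computes_dR {i : ℕ} (hi : i ≤ n) : Computes n (rightFace t i) (dR t n i) := by
  refine ⟨rightFace_isLocal t, fun x k => ?_⟩
  rw [dR, dRa_apply t (Nat.sub_le n i), Nat.sub_sub_self hi]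

end Bridge

theorem Computes.comp_apply {n : ℕ} {f g : (ℕ → X) → ℕ → X}
    {F : (Fin (n + 2) → X) → Fin (n + 1) → X} {G : (Fin (n + 3) → X) → Fin (n + 2) → X}
    (hf : Computes n f F) (hg : Computes (n + 1) g G) (x : Fin (n + 3) → X) (k : Fin (n + 1)) :
    F (G x) k = f (g (toSeq x)) k := by
  rw [hf.2]
  exact hf.1 _ _ (fun m hm => by rw [toSeq_of_lt _ (by omega), hg.2]) k k.is_le

theorem Computes.lmapDomain_comp_eq (R : Type*) [Semiring R] {n : ℕ}
    {f₁ f₂ f₃ f₄ : (ℕ → X) → ℕ → X} {F₁ F₃ : (Fin (n + 2) → X) → Fin (n + 1) → X}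
    {F₂ F₄ : (Fin (n + 3) → X) → Fin (n + 2) → X}
    (h₁ : Computes n f₁ F₁) (h₂ : Computes (n + 1) f₂ F₂) (h₃ : Computes n f₃ F₃)
    (h₄ : Computes (n + 1) f₄ F₄) (h : ∀ x, f₁ (f₂ x) = f₃ (f₄ x)) :
    (Finsupp.lmapDomain R R F₁).comp (Finsupp.lmapDomain R R F₂) =
      (Finsupp.lmapDomain R R F₃).comp (Finsupp.lmapDomain R R F₄) := by
  rw [← Finsupp.lmapDomain_comp, ← Finsupp.lmapDomain_comp]
  congr 1
  funext x k
  rw [Function.comp_apply, Function.comp_apply, h₁.comp_apply h₂, h₃.comp_apply h₄, h]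

/-- With `dᵢⁿ := dᵢⁿ'ᴸ − dᵢⁿ'ᴿ`, the family `(Cₙ, dᵢⁿ)` is a
presimplicial module when the ternary operation satisfies LN and RN:
`dᵢⁿ⁻¹ dⱼⁿ = dⱼ₋₁ⁿ⁻¹ dᵢⁿ` for `i < j ≤ n`. -/
theorem stmt6 (R : Type*) [CommRing R] (t : X → X → X → X)
    (hLN : ∀ a b c d, t a b (t b c d) = t a (t a b c) (t (t a b c) c d))
    (hRN : ∀ a b c d, t (t a b c) c d = t (t a b (t b c d)) (t b c d) d) :
    ∀ n i j : ℕ, i < j → j ≤ n + 1 →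
      (dLhat R t n i - dRhat R t n i).comp
          (dLhat R t (n + 1) j - dRhat R t (n + 1) j)
        = (dLhat R t n (j - 1) - dRhat R t n (j - 1)).comp
            (dLhat R t (n + 1) i - dRhat R t (n + 1) i) := by
  intro n i j hij hj
  obtain ⟨j, rfl⟩ : ∃ j', j = j' + 1 := ⟨j - 1, by omega⟩
  have hi : i ≤ j := by omega
  rw [Nat.add_sub_cancel]
  have hLL : (dLhat R t n i).comp (dLhat R t (n + 1) (j + 1)) =
      (dLhat R t n j).comp (dLhat R t (n + 1) i) :=
    Computes.lmapDomain_comp_eq R (computes_dL t (by omega)) (computes_dL t (by omega))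
      (computes_dL t (by omega)) (computes_dL t (by omega)) (leftFace_leftFace hLN hRN hi)
  have hRR : (dRhat R t n i).comp (dRhat R t (n + 1) (j + 1)) =
      (dRhat R t n j).comp (dRhat R t (n + 1) i) :=
    Computes.lmapDomain_comp_eq R (computes_dR t (by omega)) (computes_dR t (by omega))
      (computes_dR t (by omega)) (computes_dR t (by omega)) (rightFace_rightFace hLN hRN hi)
  have hLR : (dLhat R t n i).comp (dRhat R t (n + 1) (j + 1)) =
      (dRhat R t n j).comp (dLhat R t (n + 1) i) :=
    Computes.lmapDomain_comp_eq R (computes_dL t (by omega)) (computes_dR t (by omega))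
      (computes_dR t (by omega)) (computes_dL t (by omega)) (leftFace_rightFace hi)
  have hRL : (dRhat R t n i).comp (dLhat R t (n + 1) (j + 1)) =
      (dLhat R t n j).comp (dRhat R t (n + 1) i) :=
    Computes.lmapDomain_comp_eq R (computes_dR t (by omega)) (computes_dL t (by omega))
      (computes_dL t (by omega)) (computes_dR t (by omega)) (rightFace_leftFace hLN hRN hi)
  simp only [LinearMap.sub_comp, LinearMap.comp_sub, hLL, hRR, hLR, hRL]
  abel
end

section
/- Let X be a set with ternary operation [ ] satisfying the right nesting condition RN: [[abc]cd] = [[ab[bcd]][bcd]d]. Suppose b = [abc]. Then for any e ∈ X, the triple ([ab[bce]], [bce], e) is again degenerate, i.e., [[ab[bce]][bce]e] = [bce]. -/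
/-- If the ternary operation satisfies the right nesting
condition RN and `(a,b,c)` is degenerate (`b = [abc]`), then for any `e`
the triple `([ab[bce]], [bce], e)` is again degenerate:
`[[ab[bce]][bce]e] = [bce]`. -/
theorem stmt8 {X : Type*} (t : X → X → X → X)
    (hRN : ∀ a b c d, t (t a b c) c d = t (t a b (t b c d)) (t b c d) d)
    (a b c : X) (hdeg : b = t a b c) :
    ∀ e : X, t (t a b (t b c e)) (t b c e) e = t b c e := by
  intro e
  rw [← hRN, ← hdeg]
end

section
/- Let X be a set with ternary operation [ ] satisfying LN, and p, k ≥ 0. With Cₙ^{(p,k),D} the degenerate submodule (generated by tuples with a degenerate consecutive triple at positions i, i+1, i+2 for some p ≤ i ≤ n−1−k), the truncated right differential ∂ₙ^{(p,k),R} = Σ_{i=p}^{n−k} (−1)ⁱ dᵢⁿ'ᴿ maps Cₙ^{(p,k),D} into Cₙ₋₁^{(p,k),D}. -/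
universe u
variable {X : Type u}

open Fin.NatCast in
/-- The `(p,k)`-degenerate submodule `Cₙ^{(p,k),D}`: spanned by tuples with a
degenerate consecutive triple at positions `i, i+1, i+2` for some `p ≤ i`
with `i + 2 ≤ n + 1 − k`. -/
noncomputable def Cdeg (R : Type*) [CommRing R] (t : X → X → X → X) (p k n : ℕ) :
    Submodule R ((Fin (n + 2) → X) →₀ R) :=
  Submodule.span R {f | ∃ x : Fin (n + 2) → X, ∃ i : ℕ, p ≤ i ∧ i + 2 + k ≤ n + 1 ∧
    x (↑(i + 1)) = t (x ↑i) (x ↑(i + 1)) (x ↑(i + 2)) ∧ f = Finsupp.single x 1}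

/-!
If `x` has a degenerate triple at `i`, the substitution at `i + 1` leaves `x` unchanged, so the
faces `dᵢ x` and `dᵢ₊₁ x` coincide and cancel in the alternating sum. A face `dⱼ` with `j ≥ i + 2`
does not touch the entries `0, …, j`, so the triple at `i` stays degenerate; a face `dⱼ` with
`j < i` produces a degenerate triple at `i - 1`, by LN and the degeneracy of `x`.
-/

open Fin.NatCast

lemma Fin.natCast_ne_natCast {N : ℕ} [NeZero N] {a b : ℕ} (ha : a < N) (hb : b < N)
    (h : a ≠ b) : (a : Fin N) ≠ b :=
  fun e => h (by rw [← Fin.val_cast_of_lt ha, ← Fin.val_cast_of_lt hb, e])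

section FaceMaps

variable (t : X → X → X → X) {n : ℕ}

def IsDegenerateAt {N : ℕ} [NeZero N] (x : Fin N → X) (i : ℕ) : Prop :=
  x ↑(i + 1) = t (x ↑i) (x ↑(i + 1)) (x ↑(i + 2))

lemma subst_apply_of_ne {i : ℕ} (x : Fin (n + 2) → X) {j : Fin (n + 2)}
    (h : j ≠ (i : Fin (n + 2))) : subst t n i x j = x j :=
  Function.update_of_ne h _ _

lemma subst_succ (i : ℕ) (x : Fin (n + 2) → X) :
    subst t n (i + 1) x = Function.update x ↑(i + 1) (t (x ↑i) (x ↑(i + 1)) (x ↑(i + 2))) := by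
  simp only [subst, Nat.cast_add, Nat.cast_one, add_sub_cancel_right, add_assoc,
    one_add_one_eq_two, Nat.cast_ofNat]

lemma subst_succ_eq_self_iff {i : ℕ} {x : Fin (n + 2) → X} :
    subst t n (i + 1) x = x ↔ IsDegenerateAt t x i := by
  rw [subst_succ, Function.update_eq_self_iff, IsDegenerateAt, eq_comm]

lemma dR_self (x : Fin (n + 2) → X) : dR t n n x = fun j => x j.castSucc := by
  simp only [dR, Nat.sub_self, dRa]

lemma dR_eq_dR_succ_subst {i : ℕ} (hi : i < n) (x : Fin (n + 2) → X) :
    dR t n i x = dR t n (i + 1) (subst t n (i + 1) x) := by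
  obtain ⟨m, hm⟩ : ∃ m, n - i = m + 1 := ⟨n - i - 1, by omega⟩
  rw [dR, dR, hm, dRa, show n - m = i + 1 by omega, show n - (i + 1) = m by omega]

lemma dR_apply_of_le {i m : ℕ} (hm : m ≤ i) (hi : i ≤ n) (x : Fin (n + 2) → X) :
    dR t n i x ↑m = x ↑m := by
  induction h : n - i generalizing i x with
  | zero =>
    rw [show i = n by omega, dR_self]
    dsimp only
    congr 1
    exact Fin.ext (by rw [Fin.val_castSucc, Fin.val_cast_of_lt (by omega : m < n + 1),
      Fin.val_cast_of_lt (by omega : m < n + 2)])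
  | succ l ih =>
    rw [dR_eq_dR_succ_subst t (by omega), ih (by omega) (by omega) _ (by omega),
      subst_apply_of_ne]
    exact Fin.natCast_ne_natCast (by omega) (by omega) (by omega)

lemma dR_apply_succ {i q : ℕ} (hiq : i ≤ q) (hq : q + 1 ≤ n) (x : Fin (n + 2) → X) :
    dR t n i x ↑(q + 1) = t (dR t n i x ↑q) (x ↑(q + 1)) (x ↑(q + 2)) := by
  induction h : n - i generalizing i x with
  | zero => omega
  | succ l ih =>
    rw [dR_eq_dR_succ_subst t (by omega)]
    rcases hiq.eq_or_lt with rfl | hlt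
    · rw [dR_apply_of_le t le_rfl (by omega), dR_apply_of_le t (by omega) (by omega), subst_succ,
        Function.update_self, Function.update_of_ne]
      exact Fin.natCast_ne_natCast (by omega) (by omega) (by omega)
    · rw [ih hlt _ (by omega), subst_apply_of_ne, subst_apply_of_ne]
      all_goals
        exact Fin.natCast_ne_natCast (by omega) (by omega) (by omega)

lemma dR_succ_eq_of_isDegenerateAt {i : ℕ} {x : Fin (n + 2) → X} (hx : IsDegenerateAt t x i)
    (hi : i + 1 ≤ n) : dR t n (i + 1) x = dR t n i x := by
  rw [dR_eq_dR_succ_subst t hi, (subst_succ_eq_self_iff t).2 hx]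

lemma isDegenerateAt_dR_of_add_two_le {i j : ℕ} {x : Fin (n + 2) → X}
    (hx : IsDegenerateAt t x i) (hij : i + 2 ≤ j) (hj : j ≤ n) :
    IsDegenerateAt t (dR t n j x) i := by
  rw [IsDegenerateAt, dR_apply_of_le t (by omega) hj, dR_apply_of_le t (by omega) hj,
    dR_apply_of_le t hij hj]
  exact hx

lemma isDegenerateAt_dR_of_le
    (hLN : ∀ a b c d, t a b (t b c d) = t a (t a b c) (t (t a b c) c d))
    {i j : ℕ} {x : Fin (n + 2) → X} (hx : IsDegenerateAt t x (i + 1)) (hji : j ≤ i)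
    (hi : i + 2 ≤ n) : IsDegenerateAt t (dR t n j x) i := by
  have hx' : x ↑(i + 2) = t (x ↑(i + 1)) (x ↑(i + 2)) (x ↑(i + 3)) := hx
  have h1 : dR t n j x ↑(i + 1) = t (dR t n j x ↑i) (x ↑(i + 1)) (x ↑(i + 2)) :=
    dR_apply_succ t hji (by omega) x
  have h2 : dR t n j x ↑(i + 2) = t (dR t n j x ↑(i + 1)) (x ↑(i + 2)) (x ↑(i + 3)) :=
    dR_apply_succ t (by omega : j ≤ i + 1) hi x
  rw [IsDegenerateAt, h2, h1, ← hLN, ← hx']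

end FaceMaps

section DegenerateSubmodule

variable (R : Type*) [CommRing R] (t : X → X → X → X) {p k n : ℕ}

lemma single_mem_Cdeg {x : Fin (n + 2) → X} {i : ℕ} (hx : IsDegenerateAt t x i) (hpi : p ≤ i)
    (hik : i + 2 + k ≤ n + 1) : Finsupp.single x 1 ∈ Cdeg R t p k n :=
  Submodule.subset_span ⟨x, i, hpi, hik, hx, rfl⟩

lemma single_dR_mem_Cdeg
    (hLN : ∀ a b c d, t a b (t b c d) = t a (t a b c) (t (t a b c) c d))
    {x : Fin (n + 3) → X} {i j : ℕ} (hx : IsDegenerateAt t x i) (hpi : p ≤ i)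
    (hik : i + 2 + k ≤ n + 2) (hpj : p ≤ j) (hjk : j + k ≤ n + 1) (hji : j ≠ i)
    (hji' : j ≠ i + 1) : Finsupp.single (dR t (n + 1) j x) 1 ∈ Cdeg R t p k n := by
  rcases lt_or_gt_of_ne hji with hlt | hgt
  · obtain ⟨i, rfl⟩ : ∃ i', i = i' + 1 := ⟨i - 1, by omega⟩
    exact single_mem_Cdeg R t (isDegenerateAt_dR_of_le t hLN hx (by omega) (by omega))
      (by omega) (by omega)
  · exact single_mem_Cdeg R t (isDegenerateAt_dR_of_add_two_le t hx (by omega) (by omega)) hpi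
      (by omega)

end DegenerateSubmodule

/-- If the ternary operation satisfies LN, the truncated right
differential `∂ₙ^{(p,k),R} = Σ_{i=p}^{n−k} (−1)ⁱ dᵢⁿ'ᴿ` maps the degenerate
submodule `Cₙ^{(p,k),D}` into `Cₙ₋₁^{(p,k),D}`. -/
theorem stmt11 (R : Type*) [CommRing R] (t : X → X → X → X)
    (hLN : ∀ a b c d, t a b (t b c d) = t a (t a b c) (t (t a b c) c d))
    (p k : ℕ) :
    ∀ n : ℕ,
      (Cdeg R t p k (n + 1)).map
          (∑ i ∈ Finset.Icc p (n + 1),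
            if i + k ≤ n + 1 then ((-1 : R) ^ i) • dRhat R t (n + 1) i else 0)
        ≤ Cdeg R t p k n := by
  intro n
  rw [Cdeg, Submodule.map_span_le, ← Finset.sum_filter]
  rintro _ ⟨x, i, hpi, hik, hx, rfl⟩
  set S := (Finset.Icc p (n + 1)).filter (· + k ≤ n + 1)
  have hi : i ∈ S := by simp only [S, Finset.mem_filter, Finset.mem_Icc]; omega
  have hi' : i + 1 ∈ S.erase i := by
    simp only [S, Finset.mem_erase, Finset.mem_filter, Finset.mem_Icc]; omega
  have hcancel : (-1 : R) ^ (i + 1) • Finsupp.single (dR t (n + 1) (i + 1) x) (1 : R) +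
      (-1 : R) ^ i • Finsupp.single (dR t (n + 1) i x) 1 = 0 := by
    rw [dR_succ_eq_of_isDegenerateAt t hx (by omega), pow_succ, mul_neg_one, neg_smul,
      neg_add_cancel]
  rw [LinearMap.sum_apply]
  simp only [LinearMap.smul_apply, dRhat, Finsupp.lmapDomain_apply, Finsupp.mapDomain_single]
  rw [← Finset.sum_erase_add _ _ hi, ← Finset.sum_erase_add _ _ hi', add_assoc (Finset.sum _ _),
    hcancel, add_zero]
  refine Submodule.sum_mem _ fun j hj => Submodule.smul_mem _ _ ?_
  simp only [S, Finset.mem_erase, Finset.mem_filter, Finset.mem_Icc] at hj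
  exact single_dR_mem_Cdeg R t hLN hx hpi hik (by omega) (by omega) (by omega) (by omega)
end

section
/- For all elements a, b, c, d of a KTQ (X,[ ]): ∂₂(a,b,c,d) := (b,c,d) − (a,[abc],[[abc]cd]) − ([abc],c,d) + (a,b,[bcd]) + ([ab[bcd]],[bcd],d) − (a,b,c) is a cycle for ∂₁, i.e., ∂₁(∂₂(a,b,c,d)) = 0 in C₀ = R⟨X²⟩, where ∂₁(x,y,z) = (y,z) − (x,[xyz]) − ([xyz],z) + (x,y). -/
/-- For a KTQ `(X,[ ])` (ternary quasigroup satisfying LN and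
RN) and `a,b,c,d ∈ X`, the chain `∂₂(a,b,c,d)` is a cycle for `∂₁`:
`∂₁(∂₂(a,b,c,d)) = 0` in `C₀ = R⟨X²⟩`, where
`∂₁(x,y,z) = (y,z) − (x,[xyz]) − ([xyz],z) + (x,y)`. -/
theorem stmt16 (R : Type*) [CommRing R] {X : Type*} (t : X → X → X → X)
    (h1 : ∀ b c, Function.Bijective fun x => t x b c)
    (h2 : ∀ a c, Function.Bijective fun y => t a y c)
    (h3 : ∀ a b, Function.Bijective fun z => t a b z)
    (hLN : ∀ a b c d, t a b (t b c d) = t a (t a b c) (t (t a b c) c d))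
    (hRN : ∀ a b c d, t (t a b c) c d = t (t a b (t b c d)) (t b c d) d)
    (a b c d : X) :
    let D1 : X → X → X → ((X × X) →₀ R) := fun x y z =>
      Finsupp.single (y, z) 1 - Finsupp.single (x, t x y z) 1
        - Finsupp.single (t x y z, z) 1 + Finsupp.single (x, y) 1
    D1 b c d - D1 a (t a b c) (t (t a b c) c d) - D1 (t a b c) c d
      + D1 a b (t b c d) + D1 (t a b (t b c d)) (t b c d) d - D1 a b c = 0 := by
  intro D1
  simp only [D1, ← hLN a b c d, ← hRN a b c d]
  abel
end
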